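/- arXiv:2003.10939 — 2 statements merged into one kernel-verified Lean document; each statement's English description precedes it below -/
import Mathlib

section
/- Let A be an M×N matrix over the quaternions with decomposition A = A_h + A_v·j where A_h, A_v are complex matrices. Then the right periodic autocorrelation satisfies R_A = R_{A_h} + R_{A_v} + (A_v ⋆ A_h − A_h ⋆ A_v)·j, where ⋆ denotes the conjugate-free periodic cross-correlation. -/
noncomputable section
open scoped BigOperators

/-- Embedding of ℂ into the quaternions (zero j and k components). -/
def cq (z : ℂ) : Quaternion ℝ := ⟨z.re, z.im, 0, 0⟩

/-- The quaternion unit i. -/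
def qi : Quaternion ℝ := ⟨0, 1, 0, 0⟩

/-- The quaternion unit j. -/
def qj : Quaternion ℝ := ⟨0, 0, 1, 0⟩

/-- The quaternion unit k. -/
def qk : Quaternion ℝ := ⟨0, 0, 0, 1⟩

/-- Conjugate-free periodic cross-correlation of quaternion matrices. -/
def qcorr {M N : ℕ} [NeZero M] [NeZero N]
    (X Y : Matrix (ZMod M) (ZMod N) (Quaternion ℝ)) :
    Matrix (ZMod M) (ZMod N) (Quaternion ℝ) :=
  fun m n => ∑ k, ∑ l, X k l * Y (k + m) (l + n)

/-- Right periodic autocorrelation of a quaternion matrix. -/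
def Rq {M N : ℕ} [NeZero M] [NeZero N]
    (A : Matrix (ZMod M) (ZMod N) (Quaternion ℝ)) :
    Matrix (ZMod M) (ZMod N) (Quaternion ℝ) :=
  qcorr A (fun k l => star (A k l))

/-- Conjugate-free periodic cross-correlation of complex matrices. -/
def ccorr {M N : ℕ} [NeZero M] [NeZero N]
    (X Y : Matrix (ZMod M) (ZMod N) ℂ) : Matrix (ZMod M) (ZMod N) ℂ :=
  fun m n => ∑ k, ∑ l, X k l * Y (k + m) (l + n)

/-- Complex 2D periodic autocorrelation. -/
def Rc {M N : ℕ} [NeZero M] [NeZero N]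
    (A : Matrix (ZMod M) (ZMod N) ℂ) : Matrix (ZMod M) (ZMod N) ℂ :=
  ccorr A (fun k l => star (A k l))

/-! Write each entry as `a + b j` with `a, b` complex. Because `j z = z̄ j` and `j² = -1`,
`(a + b j)(c + d j)* = (a c̄ + b d̄) + (b c - a d) j`, and summing this identity over the
periodic shifts, using that `ℂ ↪ ℍ` is additive, separates the autocorrelation into its
complex and `j` parts. -/

open Finset Quaternion

lemma cq_eq_ofComplex : cq = ofComplex := rfl

@[simp] lemma re_qj : qj.re = 0 := rfl
@[simp] lemma imI_qj : qj.imI = 0 := rfl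
@[simp] lemma imJ_qj : qj.imJ = 1 := rfl
@[simp] lemma imK_qj : qj.imK = 0 := rfl

lemma star_cq (z : ℂ) : star (cq z) = cq (star z) := by
  ext <;> simp [cq_eq_ofComplex]

lemma star_qj : star qj = -qj := by
  ext <;> simp

lemma qj_mul_qj : qj * qj = -1 := by
  ext <;> simp [re_mul, imI_mul, imJ_mul, imK_mul]

lemma qj_mul_cq (z : ℂ) : qj * cq z = cq (star z) * qj := by
  ext <;> simp [cq_eq_ofComplex, re_mul, imI_mul, imJ_mul, imK_mul]

lemma star_cq_add_cq_mul_qj (c d : ℂ) : star (cq c + cq d * qj) = cq (star c) - cq d * qj := by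
  rw [star_add, star_mul, star_qj, star_cq, star_cq, neg_mul, qj_mul_cq, star_star,
    sub_eq_add_neg]

lemma cq_add_cq_mul_qj_mul_star (a b c d : ℂ) :
    (cq a + cq b * qj) * star (cq c + cq d * qj) =
      cq (a * star c + b * star d) + cq (b * c - a * d) * qj := by
  calc (cq a + cq b * qj) * star (cq c + cq d * qj)
      = cq a * cq (star c) - cq a * cq d * qj + cq b * (qj * cq (star c))
          - cq b * (qj * cq d) * qj := by rw [star_cq_add_cq_mul_qj]; noncomm_ring
    _ = cq a * cq (star c) - cq a * cq d * qj + cq b * cq c * qj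
          - cq b * cq (star d) * (qj * qj) := by
        rw [qj_mul_cq, qj_mul_cq, star_star]; noncomm_ring
    _ = cq (a * star c + b * star d) + cq (b * c - a * d) * qj := by
        rw [qj_mul_qj]; simp only [cq_eq_ofComplex, map_add, map_mul, map_sub]; noncomm_ring

lemma sum_cq_add_cq_mul_qj {ι : Type*} (s : Finset ι) (x y : ι → ℂ) :
    ∑ i ∈ s, (cq (x i) + cq (y i) * qj) = cq (∑ i ∈ s, x i) + cq (∑ i ∈ s, y i) * qj := by
  simp only [sum_add_distrib, ← sum_mul, cq_eq_ofComplex, map_sum]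

theorem autocorrelation_decomposition {M N : ℕ} [NeZero M] [NeZero N]
    (Ah Av : Matrix (ZMod M) (ZMod N) ℂ)
    (A : Matrix (ZMod M) (ZMod N) (Quaternion ℝ))
    (hA : ∀ k l, A k l = cq (Ah k l) + cq (Av k l) * qj) :
    ∀ m n, Rq A m n =
      cq (Rc Ah m n) + cq (Rc Av m n) +
        cq (ccorr Av Ah m n - ccorr Ah Av m n) * qj := by
  intro m n
  simp only [Rq, qcorr, hA, cq_add_cq_mul_qj_mul_star, sum_cq_add_cq_mul_qj]
  simp only [Rc, ccorr, cq_eq_ofComplex, ← map_add, sum_add_distrib, sum_sub_distrib]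
end
end

section
/- Two complex M×N matrices X and Y with ‖X‖_F = ‖Y‖_F = √(MN) form a periodic complementary pair (R_X(m,n) + R_Y(m,n) = 0 for all (m,n) ≠ (0,0)) if and only if |F(X)(u,v)|² + |F(Y)(u,v)|² = 2MN for all (u,v), where F denotes the 2D discrete Fourier transform. -/
noncomputable section
open scoped BigOperators

/-- 2D discrete Fourier transform of an M×N complex matrix. -/
def dft2 {M N : ℕ} [NeZero M] [NeZero N]
    (A : Matrix (ZMod M) (ZMod N) ℂ) : Matrix (ZMod M) (ZMod N) ℂ :=
  fun u v => ∑ k, ∑ l, A k l *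
    Complex.exp (-(2 * Real.pi * Complex.I) *
      (((k.val * u.val : ℕ) : ℂ) / (M : ℂ) + ((l.val * v.val : ℕ) : ℂ) / (N : ℂ)))

/-!
The 2D periodic autocorrelation is a character sum over `ZMod M × ZMod N`, and the
Wiener–Khinchin identity `F(R_A)(u, v) = |F(A)(-u, -v)|²` reduces to reindexing `x + y ↦ z`
in that sum. The norm hypotheses say `R_X(0,0) + R_Y(0,0) = 2MN`, so the pair is complementary
iff `R_X + R_Y` is `2MN` times the delta at the origin. The 2D DFT is injective (it is the 1D DFT
applied in each coordinate) and sends that delta to the constant `2MN`, so this is equivalent to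
`|F(X)|² + |F(Y)|² = 2MN` everywhere.
-/

open Complex Finset ZMod
open scoped ComplexConjugate

theorem AddChar.sum_map_neg_mul_sum_mul_conj_add {G : Type*} [AddCommGroup G] [Fintype G]
    (ψ : AddChar G ℂ) (f : G → ℂ) :
    ∑ y, ψ (-y) * ∑ x, f x * conj (f (x + y)) = ‖∑ x, ψ x * f x‖ ^ 2 := by
  calc ∑ y, ψ (-y) * ∑ x, f x * conj (f (x + y))
      = ∑ x, ∑ y, ψ x * f x * conj (ψ (x + y) * f (x + y)) := by
        simp only [mul_sum]
        rw [sum_comm]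
        refine sum_congr rfl fun x _ => sum_congr rfl fun y _ => ?_
        have hψ : ψ x * ψ (-(x + y)) = ψ (-y) := by
          rw [← AddChar.map_add_eq_mul]; congr 1; abel
        rw [map_mul, ← AddChar.map_neg_eq_conj, ← hψ]
        ring
    _ = ∑ x, ψ x * f x * ∑ z, conj (ψ z * f z) := by
        simp only [mul_sum]
        exact sum_congr rfl fun x _ =>
          Equiv.sum_comp (Equiv.addLeft x) fun z => ψ x * f x * conj (ψ z * f z)
    _ = ‖∑ x, ψ x * f x‖ ^ 2 := by rw [← sum_mul, ← map_sum, mul_conj']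

lemma Matrix.forall_ne_eq_zero_iff_eq_single {m n α : Type*} [DecidableEq m] [DecidableEq n]
    [Zero α] {B : Matrix m n α} {i : m} {j : n} {c : α} (h : B i j = c) :
    (∀ a b, (a, b) ≠ (i, j) → B a b = 0) ↔ B = Matrix.single i j c := by
  constructor
  · intro hB
    ext a b
    by_cases hab : (a, b) = (i, j)
    · obtain ⟨rfl, rfl⟩ := Prod.mk.inj hab
      rw [h, Matrix.single_apply_same]
    · rw [hB a b hab, Matrix.single_apply_of_ne]
      rintro ⟨rfl, rfl⟩
      exact hab rfl
  · rintro rfl a b hab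
    exact Matrix.single_apply_of_ne _ _ _ _ _ fun ⟨hi, hj⟩ => hab (by rw [hi, hj])

section
variable {M N : ℕ} [NeZero M] [NeZero N]

lemma stdAddChar_neg_mul (k u : ZMod M) :
    stdAddChar (-(k * u)) = exp (-(2 * Real.pi * I) * ((k.val * u.val : ℕ) : ℂ) / M) := by
  have hcast : -(k * u) = ((-(k.val * u.val : ℕ) : ℤ) : ZMod M) := by
    push_cast; simp only [natCast_zmod_val]
  rw [hcast, stdAddChar_coe]
  congr 1
  push_cast
  ring

lemma dft2_eq_sum_stdAddChar (A : Matrix (ZMod M) (ZMod N) ℂ) (u : ZMod M) (v : ZMod N) :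
    dft2 A u v = ∑ k, ∑ l, stdAddChar (-(k * u)) * (stdAddChar (-(l * v)) * A k l) := by
  refine sum_congr rfl fun k _ => sum_congr rfl fun l _ => ?_
  rw [stdAddChar_neg_mul, stdAddChar_neg_mul, ← mul_assoc, ← Complex.exp_add, mul_comm]
  congr 2
  ring

lemma dft2_eq_dft_dft (A : Matrix (ZMod M) (ZMod N) ℂ) : dft2 A = 𝓕 (fun k => 𝓕 (A k)) := by
  ext u v
  simp only [dft2_eq_sum_stdAddChar, dft_apply, Finset.sum_apply, Pi.smul_apply, smul_eq_mul,
    mul_sum]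

lemma dft2_injective : Function.Injective (dft2 (M := M) (N := N)) := fun A B h => by
  rw [dft2_eq_dft_dft, dft2_eq_dft_dft] at h
  exact funext fun k => dft.injective (congrFun (dft.injective h) k)

lemma dft2_add (A B : Matrix (ZMod M) (ZMod N) ℂ) (u : ZMod M) (v : ZMod N) :
    dft2 (A + B) u v = dft2 A u v + dft2 B u v := by
  simp only [dft2_eq_sum_stdAddChar, Matrix.add_apply, mul_add, sum_add_distrib]

lemma dft2_single_zero_zero (c : ℂ) (u : ZMod M) (v : ZMod N) :
    dft2 (Matrix.single 0 0 c) u v = c := by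
  simp [dft2_eq_sum_stdAddChar, Matrix.single_apply, ite_and]

def dft2Char (u : ZMod M) (v : ZMod N) : AddChar (ZMod M × ZMod N) ℂ :=
  stdAddChar.compAddMonoidHom ((AddMonoidHom.mulRight u).comp (AddMonoidHom.fst _ _)) *
    stdAddChar.compAddMonoidHom ((AddMonoidHom.mulRight v).comp (AddMonoidHom.snd _ _))

lemma dft2Char_apply (u : ZMod M) (v : ZMod N) (x : ZMod M × ZMod N) :
    dft2Char u v x = stdAddChar (x.1 * u) * stdAddChar (x.2 * v) :=
  rfl

lemma dft2_eq_sum_dft2Char (A : Matrix (ZMod M) (ZMod N) ℂ) (u : ZMod M) (v : ZMod N) :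
    dft2 A u v = ∑ x, dft2Char u v (-x) * A x.1 x.2 := by
  simp only [dft2_eq_sum_stdAddChar, Fintype.sum_prod_type, dft2Char_apply, Prod.fst_neg,
    Prod.snd_neg, neg_mul, mul_assoc]

lemma Rc_eq_sum_mul_conj_add (A : Matrix (ZMod M) (ZMod N) ℂ) (x : ZMod M × ZMod N) :
    Rc A x.1 x.2 = ∑ y : ZMod M × ZMod N, A y.1 y.2 * conj (A (y + x).1 (y + x).2) := by
  simp only [Rc, ccorr, Fintype.sum_prod_type, Prod.fst_add, Prod.snd_add, Complex.star_def]

theorem dft2_Rc (A : Matrix (ZMod M) (ZMod N) ℂ) (u : ZMod M) (v : ZMod N) :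
    dft2 (Rc A) u v = (‖dft2 A (-u) (-v)‖ ^ 2 : ℝ) := by
  have hA : dft2 A (-u) (-v) = ∑ x, dft2Char u v x * A x.1 x.2 := by
    simp only [dft2_eq_sum_dft2Char, dft2Char_apply, Prod.fst_neg, Prod.snd_neg, neg_mul_neg]
  rw [hA, dft2_eq_sum_dft2Char]
  simp only [Rc_eq_sum_mul_conj_add]
  push_cast
  exact AddChar.sum_map_neg_mul_sum_mul_conj_add (dft2Char u v) fun x => A x.1 x.2

lemma Rc_zero_zero (A : Matrix (ZMod M) (ZMod N) ℂ) :
    Rc A 0 0 = (∑ k, ∑ l, ‖A k l‖ ^ 2 : ℝ) := by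
  push_cast
  simp only [Rc, ccorr, add_zero, Complex.star_def, mul_conj']

end

theorem pcp_iff_dft {M N : ℕ} [NeZero M] [NeZero N]
    (X Y : Matrix (ZMod M) (ZMod N) ℂ)
    (hX : ∑ k, ∑ l, ‖X k l‖ ^ 2 = (M * N : ℝ))
    (hY : ∑ k, ∑ l, ‖Y k l‖ ^ 2 = (M * N : ℝ)) :
    (∀ m n, (m, n) ≠ (0, 0) → Rc X m n + Rc Y m n = 0) ↔
    (∀ u v, ‖dft2 X u v‖ ^ 2 + ‖dft2 Y u v‖ ^ 2
      = (2 * M * N : ℝ)) := by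
  have h00 : (Rc X + Rc Y) 0 0 = ((2 * M * N : ℝ) : ℂ) := by
    rw [Matrix.add_apply, Rc_zero_zero, Rc_zero_zero, hX, hY]
    push_cast
    ring
  calc (∀ m n, (m, n) ≠ (0, 0) → Rc X m n + Rc Y m n = 0)
      ↔ Rc X + Rc Y = Matrix.single 0 0 ((2 * M * N : ℝ) : ℂ) :=
        Matrix.forall_ne_eq_zero_iff_eq_single h00
    _ ↔ dft2 (Rc X + Rc Y) = dft2 (Matrix.single 0 0 ((2 * M * N : ℝ) : ℂ)) :=
        dft2_injective.eq_iff.symm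
    _ ↔ ∀ u v, ‖dft2 X (-u) (-v)‖ ^ 2 + ‖dft2 Y (-u) (-v)‖ ^ 2 = (2 * M * N : ℝ) := by
        rw [← Matrix.ext_iff]
        simp only [dft2_add, dft2_Rc, dft2_single_zero_zero, ← ofReal_add, ofReal_inj]
    _ ↔ _ := ⟨fun h u v => by simpa using h (-u) (-v), fun h u v => h _ _⟩
end
end
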